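/- arXiv:2009.02400 — 3 statements merged into one kernel-verified Lean document; each statement's English description precedes it below -/
import Mathlib

section
/- Let X be a finite set with a symmetric dissimilarity d : X → X → ℝ, and let C : X → Fin k be a fixed clustering labeling. Suppose for a uniform random permutation σ of X we define s₊(σ) = number of pairs ((i,j),(r,s)) with i≠j, r and s in distinct clusters under C∘σ, i and j in the same cluster under C∘σ, and d i j < d r s (counting unordered pairs appropriately); similarly s₋(σ) with the inequality reversed. Then the average of s₊(σ) over all permutations σ equals the average of s₋(σ) over all permutations σ. -/
/-- Count of comparisons where a within-cluster pair (under the clustering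
`C ∘ σ`) is strictly closer than a between-cluster pair. -/
noncomputable def sPlus {X : Type*} [Fintype X] [DecidableEq X] {k : ℕ}
    (d : X → X → ℝ) (C : X → Fin k) (σ : Equiv.Perm X) : ℕ :=
  (Finset.univ.filter (fun q : (X × X) × (X × X) =>
    q.1.1 ≠ q.1.2 ∧ C (σ q.1.1) = C (σ q.1.2) ∧ C (σ q.2.1) ≠ C (σ q.2.2) ∧
    d q.1.1 q.1.2 < d q.2.1 q.2.2)).card

/-- Count of comparisons where a within-cluster pair is strictly farther
than a between-cluster pair. -/
noncomputable def sMinus {X : Type*} [Fintype X] [DecidableEq X] {k : ℕ}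
    (d : X → X → ℝ) (C : X → Fin k) (σ : Equiv.Perm X) : ℕ :=
  (Finset.univ.filter (fun q : (X × X) × (X × X) =>
    q.1.1 ≠ q.1.2 ∧ C (σ q.1.1) = C (σ q.1.2) ∧ C (σ q.2.1) ≠ C (σ q.2.2) ∧
    d q.1.1 q.1.2 > d q.2.1 q.2.2)).card

open Finset

private lemma exists_perm_two {X : Type*} [DecidableEq X] {i j r s : X}
    (hij : i ≠ j) (hrs : r ≠ s) : ∃ τ : Equiv.Perm X, τ r = i ∧ τ s = j := by
  refine ⟨(Equiv.swap r i).trans (Equiv.swap ((Equiv.swap r i) s) j), ?_, ?_⟩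
  · have h1 : i ≠ (Equiv.swap r i) s := by
      have : (Equiv.swap r i) r = i := Equiv.swap_apply_left r i
      intro h
      exact hrs (Equiv.injective _ (this.trans h))
    simp only [Equiv.trans_apply, Equiv.swap_apply_left]
    exact Equiv.swap_apply_of_ne_of_ne h1 hij
  · simp only [Equiv.trans_apply, Equiv.swap_apply_left]

private lemma count_pair_eq {X : Type*} [Fintype X] [DecidableEq X] {k : ℕ}
    (C : X → Fin k) {i j r s : X} (hij : i ≠ j) (hrs : r ≠ s) :
    (univ.filter fun σ : Equiv.Perm X => C (σ i) = C (σ j)).card =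
    (univ.filter fun σ : Equiv.Perm X => C (σ r) = C (σ s)).card := by
  obtain ⟨τ, hr, hs⟩ := exists_perm_two hij hrs
  apply Finset.card_bij' (fun σ _ => σ * τ) (fun σ _ => σ * τ⁻¹)
  · intro σ hσ
    simp only [mem_filter, mem_univ, true_and] at hσ ⊢
    simpa [Equiv.Perm.mul_apply, hr, hs] using hσ
  · intro σ hσ
    simp only [mem_filter, mem_univ, true_and] at hσ ⊢
    have : C ((σ * τ⁻¹) (τ r)) = C ((σ * τ⁻¹) (τ s)) := by
      simpa [Equiv.Perm.mul_apply] using hσ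
    simpa [hr, hs] using this
  · intro σ _; simp [mul_assoc]
  · intro σ _; simp [mul_assoc]

private lemma B_symm {X : Type*} [Fintype X] [DecidableEq X] {k : ℕ} (C : X → Fin k)
    (i j r s : X) :
    (univ.filter fun σ : Equiv.Perm X =>
      i ≠ j ∧ C (σ i) = C (σ j) ∧ C (σ r) ≠ C (σ s)).card =
    (univ.filter fun σ : Equiv.Perm X =>
      r ≠ s ∧ C (σ r) = C (σ s) ∧ C (σ i) ≠ C (σ j)).card := by
  by_cases hij : i = j
  · subst hij; simp
  by_cases hrs : r = s
  · subst hrs; simp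
  have hl : (univ.filter fun σ : Equiv.Perm X => i ≠ j ∧ C (σ i) = C (σ j) ∧ C (σ r) ≠ C (σ s))
      = univ.filter fun σ => C (σ i) = C (σ j) ∧ ¬ C (σ r) = C (σ s) :=
    Finset.filter_congr fun σ _ => by simp [hij]
  have hr' : (univ.filter fun σ : Equiv.Perm X => r ≠ s ∧ C (σ r) = C (σ s) ∧ C (σ i) ≠ C (σ j))
      = univ.filter fun σ => C (σ r) = C (σ s) ∧ ¬ C (σ i) = C (σ j) :=
    Finset.filter_congr fun σ _ => by simp [hrs]
  rw [hl, hr']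
  have h1 : (univ.filter fun σ : Equiv.Perm X => C (σ i) = C (σ j) ∧ C (σ r) = C (σ s)).card
      + (univ.filter fun σ : Equiv.Perm X => C (σ i) = C (σ j) ∧ ¬ C (σ r) = C (σ s)).card
      = (univ.filter fun σ : Equiv.Perm X => C (σ i) = C (σ j)).card := by
    rw [← Finset.filter_filter, ← Finset.filter_filter]
    exact Finset.card_filter_add_card_filter_not _
  have h2 : (univ.filter fun σ : Equiv.Perm X => C (σ r) = C (σ s) ∧ C (σ i) = C (σ j)).card
      + (univ.filter fun σ : Equiv.Perm X => C (σ r) = C (σ s) ∧ ¬ C (σ i) = C (σ j)).card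
      = (univ.filter fun σ : Equiv.Perm X => C (σ r) = C (σ s)).card := by
    rw [← Finset.filter_filter, ← Finset.filter_filter]
    exact Finset.card_filter_add_card_filter_not _
  have hPP : (univ.filter fun σ : Equiv.Perm X => C (σ i) = C (σ j) ∧ C (σ r) = C (σ s)).card
      = (univ.filter fun σ : Equiv.Perm X => C (σ r) = C (σ s) ∧ C (σ i) = C (σ j)).card := by
    congr 1; apply Finset.filter_congr; intro σ _; exact and_comm
  have key := count_pair_eq C hij hrs
  omega

theorem expected_sPlus_eq_expected_sMinus {X : Type*} [Fintype X] [DecidableEq X]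
    {k : ℕ} (d : X → X → ℝ) (hsym : ∀ i j, d i j = d j i) (C : X → Fin k) :
    (∑ σ : Equiv.Perm X, (sPlus d C σ : ℝ)) / (Fintype.card (Equiv.Perm X) : ℝ) =
    (∑ σ : Equiv.Perm X, (sMinus d C σ : ℝ)) / (Fintype.card (Equiv.Perm X) : ℝ) := by
  classical
  have hsum : ∑ σ : Equiv.Perm X, sPlus d C σ = ∑ σ : Equiv.Perm X, sMinus d C σ := by
    have hform : ∀ (R : X × X → X × X → Prop) [DecidableRel R],
        (∑ σ : Equiv.Perm X, (univ.filter (fun q : (X × X) × (X × X) =>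
          q.1.1 ≠ q.1.2 ∧ C (σ q.1.1) = C (σ q.1.2) ∧ C (σ q.2.1) ≠ C (σ q.2.2) ∧
          R q.1 q.2)).card)
        = ∑ q : (X × X) × (X × X), if R q.1 q.2 then
            (univ.filter fun σ : Equiv.Perm X =>
              q.1.1 ≠ q.1.2 ∧ C (σ q.1.1) = C (σ q.1.2) ∧ C (σ q.2.1) ≠ C (σ q.2.2)).card
          else 0 := by
      intro R _
      simp only [Finset.card_filter]
      rw [Finset.sum_comm]
      refine Finset.sum_congr rfl fun q _ => ?_
      by_cases hR : R q.1 q.2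
      · simp [hR]
      · simp [hR]
    have hP := hform (fun p q => d p.1 p.2 < d q.1 q.2)
    have hM := hform (fun p q => d p.1 p.2 > d q.1 q.2)
    show (∑ σ : Equiv.Perm X, (univ.filter (fun q : (X × X) × (X × X) =>
          q.1.1 ≠ q.1.2 ∧ C (σ q.1.1) = C (σ q.1.2) ∧ C (σ q.2.1) ≠ C (σ q.2.2) ∧
          d q.1.1 q.1.2 < d q.2.1 q.2.2)).card)
        = ∑ σ : Equiv.Perm X, (univ.filter (fun q : (X × X) × (X × X) =>
          q.1.1 ≠ q.1.2 ∧ C (σ q.1.1) = C (σ q.1.2) ∧ C (σ q.2.1) ≠ C (σ q.2.2) ∧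
          d q.1.1 q.1.2 > d q.2.1 q.2.2)).card
    rw [hP, hM]
    rw [← Equiv.sum_comp (Equiv.prodComm ((X × X)) ((X × X)))
      (fun q : (X × X) × (X × X) => if d q.1.1 q.1.2 < d q.2.1 q.2.2 then
        (univ.filter fun σ : Equiv.Perm X =>
          q.1.1 ≠ q.1.2 ∧ C (σ q.1.1) = C (σ q.1.2) ∧ C (σ q.2.1) ≠ C (σ q.2.2)).card
        else 0)]
    refine Finset.sum_congr rfl fun q _ => ?_
    simp only [Equiv.prodComm_apply, Prod.fst_swap, Prod.snd_swap]
    by_cases hd : d q.2.1 q.2.2 < d q.1.1 q.1.2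
    · simp only [hd, if_pos, gt_iff_lt, if_pos hd]
      exact B_symm C q.2.1 q.2.2 q.1.1 q.1.2
    · simp [hd]
  have : (∑ σ : Equiv.Perm X, (sPlus d C σ : ℝ)) = ∑ σ : Equiv.Perm X, (sMinus d C σ : ℝ) := by
    push_cast
    exact_mod_cast congrArg (fun n : ℕ => (n : ℝ)) hsum
  rw [this]
end

section
/- Under the same null-model hypotheses, the average over all permutations σ of AUCC(σ) = s₊(σ)/(s₊(σ) + s₋(σ)) equals 1/2, where s₊(σ) + s₋(σ) = S is constant and positive. -/
/-!
Summed over all permutations, `sPlus` and `sMinus` count the same quadruples: exchanging the two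
pairs of a quadruple turns the concordant configuration into the discordant one, and since
`Perm X` acts 2-transitively on `X`, the number of `σ` putting two distinct points into a common
cluster while separating two other distinct points is symmetric in the two pairs. Hence
`∑ sPlus = ∑ sMinus = |Perm X| • S / 2`, and as every denominator equals `S`, the mean AUCC is `1/2`.
-/

open Finset Equiv

theorem sum_card_filter_comm {α β : Type*} [Fintype α] [Fintype β] (r : α → β → Prop)
    [∀ a b, Decidable (r a b)] : ∑ a, #{b | r a b} = ∑ b, #{a | r a b} :=
  sum_card_bipartiteAbove_eq_sum_card_bipartiteBelow r

section PermCounting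

variable {X : Type*} [Fintype X] [DecidableEq X]

theorem card_perm_filter_rel_eq (P : X → X → Prop) [DecidableRel P] {a b c e : X}
    (hab : a ≠ b) (hce : c ≠ e) :
    #{σ : Perm X | P (σ a) (σ b)} = #{σ : Perm X | P (σ c) (σ e)} := by
  obtain ⟨π, hπc, hπe⟩ :=
    MulAction.is_two_pretransitive_iff.mp (Perm.isMultiplyPretransitive X 2) hce hab
  rw [Perm.smul_def] at hπc hπe
  exact card_equiv (Equiv.mulRight π) (by simp [hπc, hπe])

theorem card_perm_filter_rel_and_not_comm (P : X → X → Prop) [DecidableRel P] {a b c e : X}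
    (hab : a ≠ b) (hce : c ≠ e) :
    #{σ : Perm X | P (σ a) (σ b) ∧ ¬P (σ c) (σ e)}
      = #{σ : Perm X | P (σ c) (σ e) ∧ ¬P (σ a) (σ b)} := by
  simpa only [filter_and_not] using card_sdiff_comm (card_perm_filter_rel_eq P hab hce)

theorem card_perm_concordant_eq_card_perm_discordant {Y : Type*} [DecidableEq Y]
    (d : X → X → ℝ) (C : X → Y) (a b c e : X) :
    #{σ : Perm X | a ≠ b ∧ C (σ a) = C (σ b) ∧ C (σ c) ≠ C (σ e) ∧ d a b < d c e}
      = #{σ : Perm X | c ≠ e ∧ C (σ c) = C (σ e) ∧ C (σ a) ≠ C (σ b) ∧ d c e > d a b} := by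
  by_cases h : a ≠ b ∧ c ≠ e ∧ d a b < d c e
  · obtain ⟨hab, hce, hd⟩ := h
    simpa only [hab, hce, hd, gt_iff_lt, ne_eq, not_false_eq_true, true_and, and_true]
      using card_perm_filter_rel_and_not_comm (fun x y => C x = C y) hab hce
  · rw [filter_false_of_mem, filter_false_of_mem] <;> grind

theorem sum_sPlus_eq_sum_sMinus {k : ℕ} (d : X → X → ℝ) (C : X → Fin k) :
    ∑ σ : Perm X, sPlus d C σ = ∑ σ : Perm X, sMinus d C σ := by
  simp only [sPlus, sMinus]
  rw [sum_card_filter_comm, sum_card_filter_comm (α := Perm X),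
    ← (Equiv.prodComm (X × X) (X × X)).sum_comp]
  exact sum_congr rfl fun q _ => card_perm_concordant_eq_card_perm_discordant d C _ _ _ _

end PermCounting

theorem expected_aucc_half_general {X : Type*} [Fintype X] [DecidableEq X]
    {k : ℕ} (d : X → X → ℝ) (C : X → Fin k)
    (S : ℝ) (hSpos : 0 < S)
    (hS : ∀ σ : Equiv.Perm X, (sPlus d C σ : ℝ) + (sMinus d C σ : ℝ) = S) :
    (∑ σ : Equiv.Perm X,
        (sPlus d C σ : ℝ) / ((sPlus d C σ : ℝ) + (sMinus d C σ : ℝ))) /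
      (Fintype.card (Equiv.Perm X) : ℝ) = 1 / 2 := by
  have hsum : ∑ σ : Perm X, (sPlus d C σ : ℝ) = ∑ σ : Perm X, (sMinus d C σ : ℝ) := by
    exact_mod_cast sum_sPlus_eq_sum_sMinus d C
  have htotal : ∑ σ : Perm X, ((sPlus d C σ : ℝ) + sMinus d C σ)
      = Fintype.card (Perm X) * S := by
    simp [hS]
  rw [sum_add_distrib, ← hsum] at htotal
  simp only [hS, ← sum_div]
  field_simp
  linarith

theorem expected_aucc_half {X : Type*} [Fintype X] [DecidableEq X]
    {k : ℕ} (d : X → X → ℝ) (hsym : ∀ i j, d i j = d j i) (C : X → Fin k)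
    (S : ℝ) (hSpos : 0 < S)
    (hS : ∀ σ : Equiv.Perm X, (sPlus d C σ : ℝ) + (sMinus d C σ : ℝ) = S) :
    (∑ σ : Equiv.Perm X,
        (sPlus d C σ : ℝ) / ((sPlus d C σ : ℝ) + (sMinus d C σ : ℝ))) /
      (Fintype.card (Equiv.Perm X) : ℝ) = 1 / 2 :=
  expected_aucc_half_general d C S hSpos hS
end

section
/- Let Ω be a nonempty finite set, and s₊, s₋, s₀ : Ω → ℝ≥0 with constant sum S > 0 and equal averages of s₊ and s₋ over Ω. Define A_opt(ω) = (s₊(ω)+s₀(ω))/S and A_pes(ω) = s₊(ω)/S. If the average of s₀ over Ω is strictly positive, then the average of A_opt over Ω is strictly greater than 1/2 and the average of A_pes over Ω is strictly less than 1/2. -/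
theorem optimistic_pessimistic_bias {Ω : Type*} [Fintype Ω] [Nonempty Ω]
    (sp sm s0 : Ω → ℝ)
    (hsp : ∀ ω, 0 ≤ sp ω) (hsm : ∀ ω, 0 ≤ sm ω) (hs0 : ∀ ω, 0 ≤ s0 ω)
    (S : ℝ) (hSpos : 0 < S)
    (hsum : ∀ ω, sp ω + sm ω + s0 ω = S)
    (havg : (∑ ω : Ω, sp ω) / (Fintype.card Ω : ℝ) =
            (∑ ω : Ω, sm ω) / (Fintype.card Ω : ℝ))
    (hties : 0 < (∑ ω : Ω, s0 ω) / (Fintype.card Ω : ℝ)) :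
    1 / 2 < (∑ ω : Ω, (sp ω + s0 ω) / S) / (Fintype.card Ω : ℝ) ∧
    (∑ ω : Ω, sp ω / S) / (Fintype.card Ω : ℝ) < 1 / 2 := by
  have hn : (0:ℝ) < (Fintype.card Ω : ℝ) := by
    exact_mod_cast Fintype.card_pos
  have heq : (∑ ω : Ω, sp ω) = (∑ ω : Ω, sm ω) := by
    field_simp at havg; linarith
  have htot : (∑ ω : Ω, sp ω) + (∑ ω : Ω, sm ω) + (∑ ω : Ω, s0 ω)
      = (Fintype.card Ω : ℝ) * S := by
    rw [← Finset.sum_add_distrib, ← Finset.sum_add_distrib]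
    simp [hsum, Finset.sum_const, Finset.card_univ, mul_comm]
  have h0pos : 0 < (∑ ω : Ω, s0 ω) := by
    by_contra h
    push_neg at h
    have := div_nonpos_of_nonpos_of_nonneg h hn.le
    linarith
  have h1 : (∑ ω : Ω, (sp ω + s0 ω) / S) = ((∑ ω : Ω, sp ω) + (∑ ω : Ω, s0 ω)) / S := by
    rw [← Finset.sum_div, Finset.sum_add_distrib]
  have h2 : (∑ ω : Ω, sp ω / S) = (∑ ω : Ω, sp ω) / S := by
    rw [← Finset.sum_div]
  rw [h1, h2]
  constructor
  · rw [lt_div_iff₀ hn, div_mul_eq_mul_div, lt_div_iff₀ hSpos]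
    nlinarith
  · rw [div_lt_iff₀ hn, div_mul_eq_mul_div, div_lt_iff₀ hSpos]
    nlinarith
end
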